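/- Let X be a multigraph on vertex set V in which every vertex has even degree (self-loops counted twice) and which is connected on its support. If X contains a vertex d with degree greater than 2, then by repeatedly applying shortcut operations (replacing two edges ud and dw by one edge uw) one obtains a multigraph X' in which d has degree exactly 2, every other vertex keeps its degree, X' is still connected on its support, and cost(X') ≤ cost(X) whenever the cost function satisfies the triangle inequality. -/

import Mathlib

open Finset

noncomputable section
set_option linter.unusedSectionVars false
set_option linter.unusedVariables false

variable {V : Type*}

/-- Degree of `v` in a multigraph given by a multiset of (possibly diagonal) `Sym2` edges;
self-loops count twice. -/
def mdeg [DecidableEq V] (E : Multiset (Sym2 V)) (v : V) : ℕ :=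
  (E.map (Sym2.lift ⟨fun a b => (if a = v then 1 else 0) + (if b = v then 1 else 0),
    fun _ _ => add_comm _ _⟩)).sum

/-- Cost of a multigraph: multiplicity-weighted sum of (symmetrized) edge costs. -/
def mcost (c : V → V → ℝ) (E : Multiset (Sym2 V)) : ℝ :=
  (E.map (Sym2.lift ⟨fun a b => (c a b + c b a) / 2, fun _ _ => by ring⟩)).sum

/-- The edge multiset of the closed walk visiting the vertices of `w` in cyclic order.
A singleton list yields one self-loop. -/
def walkEdges (w : List V) : Multiset (Sym2 V) :=
  (((w.zip (w.rotate 1)).map Sym2.mk.uncurry : List (Sym2 V)) : Multiset (Sym2 V))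

/-- Connectivity of a multigraph on its support. -/
def connOn [DecidableEq V] (E : Multiset (Sym2 V)) : Prop :=
  ∀ u v, 0 < mdeg E u → 0 < mdeg E v →
    Relation.ReflTransGen (fun a b => s(a, b) ∈ E) u v

section Basic
variable [DecidableEq V]

lemma mdeg_zero (v : V) : mdeg (0 : Multiset (Sym2 V)) v = 0 := rfl

lemma mdeg_add (A B : Multiset (Sym2 V)) (v : V) :
    mdeg (A + B) v = mdeg A v + mdeg B v := by
  simp [mdeg]

lemma mdeg_singleton (a b v : V) :
    mdeg ({s(a,b)} : Multiset (Sym2 V)) v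
      = (if a = v then 1 else 0) + (if b = v then 1 else 0) := by
  simp [mdeg]

lemma mdeg_cons (e : Sym2 V) (A : Multiset (Sym2 V)) (v : V) :
    mdeg (e ::ₘ A) v = mdeg ({e} : Multiset (Sym2 V)) v + mdeg A v := by
  simp [mdeg]

lemma mcost_zero (c : V → V → ℝ) : mcost c (0 : Multiset (Sym2 V)) = 0 := rfl

lemma mcost_add (c : V → V → ℝ) (A B : Multiset (Sym2 V)) :
    mcost c (A + B) = mcost c A + mcost c B := by
  simp [mcost]

lemma mcost_singleton (c : V → V → ℝ) (a b : V) :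
    mcost c ({s(a,b)} : Multiset (Sym2 V)) = (c a b + c b a) / 2 := by
  simp [mcost]

lemma exists_edge_of_mdeg_pos {F : Multiset (Sym2 V)} {x : V} (h : 0 < mdeg F x) :
    ∃ z, s(x, z) ∈ F := by
  by_contra hno
  push_neg at hno
  have : mdeg F x = 0 := by
    unfold mdeg
    rw [Multiset.sum_eq_zero]
    intro n hn
    rw [Multiset.mem_map] at hn
    obtain ⟨e, he, rfl⟩ := hn
    induction e using Sym2.inductionOn with
    | hf a b =>
      simp only [Sym2.lift_mk]
      have ha : a ≠ x := by rintro rfl; exact hno b he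
      have hb : b ≠ x := by rintro rfl; exact hno a (by rwa [Sym2.eq_swap] at he)
      simp [ha, hb]
  omega

lemma mdeg_pos_of_mem {F : Multiset (Sym2 V)} {a b : V} (h : s(a,b) ∈ F) :
    0 < mdeg F a := by
  have := Multiset.cons_erase h
  have hd : mdeg F a = mdeg ({s(a,b)} : Multiset (Sym2 V)) a + mdeg (F.erase s(a,b)) a := by
    conv_lhs => rw [← this]
    rw [mdeg_cons]
  rw [hd, mdeg_singleton]
  simp

end Basic

def openEdges : List V → Multiset (Sym2 V)
  | [] => 0
  | [_] => 0
  | a :: b :: l => s(a, b) ::ₘ openEdges (b :: l)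

lemma openEdges_cc (a b : V) (l : List V) :
    openEdges (a :: b :: l) = s(a, b) ::ₘ openEdges (b :: l) := rfl

lemma openEdges_eq_zip : ∀ (m : List V),
    openEdges m = ((m.zip m.tail).map Sym2.mk.uncurry : List (Sym2 V))
  | [] => rfl
  | [_] => rfl
  | a :: b :: l => by
    rw [openEdges_cc, openEdges_eq_zip (b :: l)]
    simp [List.zip]

lemma zip_left_irrel : ∀ (y x z : List V), x.length = y.length →
    (x ++ z).zip y = x.zip y
  | [], x, z, h => by
    have : x = [] := List.length_eq_zero_iff.mp (by simpa using h)
    simp [this]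
  | b :: y, [], z, h => by simp at h
  | b :: y, a :: x, z, h => by
    simp only [List.cons_append, List.zip_cons_cons]
    rw [zip_left_irrel y x z (by simpa using h)]

lemma rotate_one_cons (a : V) (l : List V) : (a :: l).rotate 1 = l ++ [a] := by
  have := List.rotate_cons_succ l a 0
  simpa using this

lemma walkEdges_eq_openEdges (a : V) (l : List V) :
    walkEdges (a :: l) = openEdges (a :: l ++ [a]) := by
  rw [walkEdges, rotate_one_cons, openEdges_eq_zip]
  have h1 : (a :: l ++ [a]).tail = l ++ [a] := rfl
  rw [h1]
  have h2 : (a :: l ++ [a]) = (a :: l) ++ [a] := by simp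
  rw [h2, zip_left_irrel (l ++ [a]) (a :: l) [a] (by simp)]

lemma openEdges_snoc : ∀ (l : List V) (hl : l ≠ []) (cv : V),
    openEdges (l ++ [cv]) = openEdges l + {s(l.getLast hl, cv)}
  | [], hl, _ => absurd rfl hl
  | [x], _, cv => by simp [openEdges_cc, openEdges]
  | x :: y :: m, _, cv => by
    show openEdges (x :: y :: (m ++ [cv])) = _
    rw [openEdges_cc, openEdges_cc]
    rw [show y :: (m ++ [cv]) = (y :: m) ++ [cv] from rfl,
      openEdges_snoc (y :: m) (by simp) cv]
    simp [List.getLast]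

lemma openEdges_append : ∀ (x : List V) (hx : x ≠ []) (b : V) (v' : List V),
    openEdges (x ++ b :: v') = openEdges x + (s(x.getLast hx, b) ::ₘ openEdges (b :: v'))
  | [], hx, _, _ => absurd rfl hx
  | [u], _, b, v' => by simp [openEdges_cc, openEdges]
  | u :: w :: m, _, b, v' => by
    show openEdges (u :: w :: (m ++ b :: v')) = _
    rw [openEdges_cc, openEdges_cc,
      show w :: (m ++ b :: v') = (w :: m) ++ b :: v' from rfl,
      openEdges_append (w :: m) (by simp) b v']
    simp only [List.getLast]
    rw [Multiset.cons_add]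

lemma walkEdges_cons_decomp (a : V) (l : List V) :
    walkEdges (a :: l) = openEdges (a :: l) + {s((a :: l).getLast (by simp), a)} := by
  rw [walkEdges_eq_openEdges]
  have : a :: l ++ [a] = (a :: l) ++ [a] := by simp
  rw [this, openEdges_snoc (a :: l) (by simp) a]

lemma walkEdges_append_expand (a : V) (u' : List V) (b : V) (v' : List V) :
    walkEdges ((a :: u') ++ (b :: v')) =
      openEdges (a :: u') + {s((a :: u').getLast (by simp), b)}
        + openEdges (b :: v') + {s((b :: v').getLast (by simp), a)} := by
  rw [show (a :: u') ++ (b :: v') = a :: (u' ++ b :: v') from rfl,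
    walkEdges_eq_openEdges]
  rw [show a :: (u' ++ b :: v') ++ [a] = (a :: u') ++ (b :: (v' ++ [a])) by simp,
    openEdges_append (a :: u') (by simp) b (v' ++ [a])]
  rw [show b :: (v' ++ [a]) = (b :: v') ++ [a] from rfl,
    openEdges_snoc (b :: v') (by simp) a]
  rw [← Multiset.singleton_add]
  abel

lemma walkEdges_append_comm : ∀ (u v : List V),
    walkEdges (u ++ v) = walkEdges (v ++ u)
  | [], v => by simp
  | u, [] => by simp
  | a :: u', b :: v' => by
    rw [walkEdges_append_expand a u' b v', walkEdges_append_expand b v' a u']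
    -- multiset commutativity
    abel

section Deg
variable [DecidableEq V]

lemma mdeg_openEdges (v : V) : ∀ (a : V) (l : List V),
    mdeg (openEdges (a :: l)) v + (if a = v then 1 else 0)
      + (if (a :: l).getLast (by simp) = v then 1 else 0) = 2 * (a :: l).count v
  | a, [] => by
    by_cases h : a = v <;> simp [openEdges, mdeg_zero, List.getLast, List.count_cons, h]
  | a, b :: m => by
    rw [openEdges_cc, mdeg_cons, mdeg_singleton]
    have hlast : (a :: b :: m).getLast (by simp) = (b :: m).getLast (by simp) :=
      List.getLast_cons (by simp)
    rw [hlast]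
    have IH := mdeg_openEdges v b m
    have hc : (a :: b :: m).count v = (b :: m).count v + (if a = v then 1 else 0) := by
      by_cases h : a = v <;> simp [List.count_cons, h]
    omega

lemma mdeg_walkEdges (v a : V) (l : List V) :
    mdeg (walkEdges (a :: l)) v = 2 * (a :: l).count v := by
  rw [walkEdges_cons_decomp, mdeg_add, mdeg_singleton]
  have := mdeg_openEdges v a l
  omega

end Deg

lemma walkEdges_splice (y : V) (s t : List V) :
    walkEdges (y :: (s ++ y :: t)) = walkEdges (y :: s) + walkEdges (y :: t) := by
  rw [walkEdges_eq_openEdges]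
  rw [show y :: (s ++ y :: t) ++ [y] = (y :: s) ++ (y :: (t ++ [y])) by simp]
  rw [openEdges_append (y :: s) (by simp) y (t ++ [y])]
  rw [show y :: (t ++ [y]) = (y :: t) ++ [y] from rfl,
    openEdges_snoc (y :: t) (by simp) y]
  rw [walkEdges_cons_decomp y s, walkEdges_cons_decomp y t]
  rw [← Multiset.singleton_add]
  abel

lemma mem_of_openEdges {p q : V} : ∀ (m : List V), s(p, q) ∈ openEdges m → p ∈ m
  | [], h => by simp [openEdges] at h
  | [x], h => by simp [openEdges] at h
  | a :: b :: l, h => by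
    rw [openEdges_cc, Multiset.mem_cons] at h
    rcases h with h | h
    · rw [Sym2.eq_iff] at h
      rcases h with ⟨rfl, rfl⟩ | ⟨rfl, rfl⟩ <;> simp
    · have := mem_of_openEdges (b :: l) h
      simp at this ⊢
      tauto

lemma mem_of_walkEdges {p q : V} (a : V) (l : List V)
    (h : s(p, q) ∈ walkEdges (a :: l)) : p ∈ a :: l := by
  rw [walkEdges_eq_openEdges] at h
  have := mem_of_openEdges _ h
  simp at this ⊢
  tauto


lemma openEdges_le_walkEdges (a : V) (l : List V) :
    openEdges (a :: l) ≤ walkEdges (a :: l) := by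
  rw [walkEdges_cons_decomp]
  exact Multiset.le_add_right _ _

lemma chain_conn : ∀ (l : List V) (a x : V), x ∈ a :: l →
    Relation.ReflTransGen (fun p q => s(p, q) ∈ openEdges (a :: l)) x a
  | [], a, x, hx => by
    simp at hx
    exact hx ▸ Relation.ReflTransGen.refl
  | b :: m, a, x, hx => by
    rcases List.mem_cons.mp hx with rfl | hx'
    · exact Relation.ReflTransGen.refl
    · have IH := chain_conn m b x hx'
      have mono : ∀ p q, s(p,q) ∈ openEdges (b :: m) → s(p,q) ∈ openEdges (a :: b :: m) := by
        intro p q h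
        rw [openEdges_cc, Multiset.mem_cons]; exact Or.inr h
      have step : Relation.ReflTransGen (fun p q => s(p, q) ∈ openEdges (a :: b :: m)) x b :=
        Relation.ReflTransGen.mono mono _ _ IH
      exact step.tail (by rw [openEdges_cc, Multiset.mem_cons]; exact Or.inl (Sym2.eq_swap ▸ rfl))

lemma connOn_walkEdges [DecidableEq V] (a : V) (l : List V) :
    connOn (walkEdges (a :: l)) := by
  intro u v hu hv
  rw [mdeg_walkEdges] at hu hv
  have hu' : u ∈ a :: l := by
    by_contra h
    rw [List.count_eq_zero_of_not_mem h] at hu; omega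
  have hv' : v ∈ a :: l := by
    by_contra h
    rw [List.count_eq_zero_of_not_mem h] at hv; omega
  have mono : ∀ p q : V, s(p,q) ∈ openEdges (a :: l) → s(p,q) ∈ walkEdges (a :: l) := by
    intro p q h; exact Multiset.subset_of_le (openEdges_le_walkEdges a l) h
  have hsym : Symmetric (fun p q : V => s(p, q) ∈ walkEdges (a :: l)) := by
    intro p q h; rwa [Sym2.eq_swap]
  have h1 := Relation.ReflTransGen.mono mono _ _ (chain_conn l a u hu')
  have h2 := Relation.ReflTransGen.mono mono _ _ (chain_conn l a v hv')
  exact h1.trans ((@Relation.ReflTransGen.symmetric _ _ ⟨fun _ _ h => hsym h⟩).symm _ _ h2)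

section Trail
variable [DecidableEq V]

lemma mdeg_erase {F : Multiset (Sym2 V)} {e : Sym2 V} (he : e ∈ F) (v : V) :
    mdeg F v = mdeg ({e} : Multiset (Sym2 V)) v + mdeg (F.erase e) v := by
  conv_lhs => rw [← Multiset.cons_erase he]
  rw [mdeg_cons]

lemma openEdges_cons_ne_nil (x : V) (l : List V) (h : l ≠ []) :
    openEdges (x :: l) = s(x, l.head h) ::ₘ openEdges l := by
  cases l with
  | nil => exact absurd rfl h
  | cons c m => rfl

lemma trail_exists : ∀ (n : ℕ) (F : Multiset (Sym2 V)) (x v : V),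
    F.card ≤ n → x ≠ v → Odd (mdeg F x) →
    (∀ z, z ≠ x → z ≠ v → Even (mdeg F z)) →
    ∃ (l : List V) (h : l ≠ []), l.head h = x ∧ l.getLast h = v ∧ openEdges l ≤ F := by
  intro n
  induction n with
  | zero =>
    intro F x v hcard hxv hodd heven
    have : F = 0 := Multiset.card_eq_zero.mp (Nat.le_zero.mp hcard)
    rw [this] at hodd
    simp [mdeg_zero] at hodd
  | succ n IH =>
    intro F x v hcard hxv hodd heven
    have hpos : 0 < mdeg F x := by
      rcases hodd with ⟨k, hk⟩; omega
    obtain ⟨z, hz⟩ := exists_edge_of_mdeg_pos hpos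
    by_cases hzv : z = v
    · subst hzv
      refine ⟨[x, z], by simp, rfl, rfl, ?_⟩
      have : openEdges [x, z] = {s(x,z)} := rfl
      rw [this, Multiset.singleton_le]
      exact hz
    · by_cases hzx : z = x
      · rw [hzx] at hz
        have hcard' : (F.erase s(x,x)).card ≤ n := by
          rw [Multiset.card_erase_of_mem hz, Nat.pred_eq_sub_one]
          have : 0 < Multiset.card F := Multiset.card_pos.mpr (by rintro rfl; simp at hz)
          omega
        have hdeg : ∀ w, mdeg F w
            = mdeg ({s(x,x)} : Multiset (Sym2 V)) w + mdeg (F.erase s(x,x)) w :=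
          fun w => mdeg_erase hz w
        have hx2 : mdeg ({s(x,x)} : Multiset (Sym2 V)) x = 2 := by
          rw [mdeg_singleton]; simp
        have hodd' : Odd (mdeg (F.erase s(x,x)) x) := by
          have h1 := hdeg x
          rw [hx2] at h1
          rcases hodd with ⟨k, hk⟩
          exact ⟨k - 1, by omega⟩
        have heven' : ∀ w, w ≠ x → w ≠ v → Even (mdeg (F.erase s(x,x)) w) := by
          intro w hwx hwv
          have h1 := hdeg w
          have h2 : mdeg ({s(x,x)} : Multiset (Sym2 V)) w = 0 := by
            rw [mdeg_singleton]; simp [Ne.symm hwx]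
          rcases heven w hwx hwv with ⟨k, hk⟩
          exact ⟨k, by omega⟩
        obtain ⟨l, hl, hhead, hlast, hle⟩ := IH (F.erase s(x,x)) x v hcard' hxv hodd' heven'
        refine ⟨x :: l, by simp, rfl, ?_, ?_⟩
        · rw [List.getLast_cons hl]; exact hlast
        · rw [openEdges_cons_ne_nil x l hl, hhead]
          calc s(x, x) ::ₘ openEdges l ≤ s(x,x) ::ₘ F.erase s(x,x) :=
                Multiset.cons_le_cons _ hle
            _ = F := Multiset.cons_erase hz
      · -- z ≠ x, z ≠ v
        have hxz : x ≠ z := fun h => hzx h.symm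
        have hcard' : (F.erase s(x,z)).card ≤ n := by
          rw [Multiset.card_erase_of_mem hz, Nat.pred_eq_sub_one]
          have : 0 < Multiset.card F := Multiset.card_pos.mpr (by rintro rfl; simp at hz)
          omega
        have hdeg : ∀ w, mdeg F w
            = mdeg ({s(x,z)} : Multiset (Sym2 V)) w + mdeg (F.erase s(x,z)) w :=
          fun w => mdeg_erase hz w
        have hdx : mdeg ({s(x,z)} : Multiset (Sym2 V)) x = 1 := by
          rw [mdeg_singleton]; simp [hzx]
        have hdz : mdeg ({s(x,z)} : Multiset (Sym2 V)) z = 1 := by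
          rw [mdeg_singleton]; simp [hxz]
        have hzpos : 0 < mdeg F z :=
          mdeg_pos_of_mem (Sym2.eq_swap ▸ hz)
        have hodd' : Odd (mdeg (F.erase s(x,z)) z) := by
          have h1 := hdeg z
          rw [hdz] at h1
          rcases heven z (fun h => hzx h) hzv with ⟨k, hk⟩
          exact ⟨k - 1, by omega⟩
        have heven' : ∀ w, w ≠ z → w ≠ v → Even (mdeg (F.erase s(x,z)) w) := by
          intro w hwz hwv
          have h1 := hdeg w
          by_cases hwx : w = x
          · subst hwx
            rw [hdx] at h1
            rcases hodd with ⟨k, hk⟩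
            exact ⟨k, by omega⟩
          · have h2 : mdeg ({s(x,z)} : Multiset (Sym2 V)) w = 0 := by
              rw [mdeg_singleton]; simp [Ne.symm hwx, Ne.symm hwz]
            rcases heven w hwx hwv with ⟨k, hk⟩
            exact ⟨k, by omega⟩
        obtain ⟨l, hl, hhead, hlast, hle⟩ := IH (F.erase s(x,z)) z v hcard' hzv hodd' heven'
        refine ⟨x :: l, by simp, rfl, ?_, ?_⟩
        · rw [List.getLast_cons hl]; exact hlast
        · rw [openEdges_cons_ne_nil x l hl, hhead]
          calc s(x, z) ::ₘ openEdges l ≤ s(x,z) ::ₘ F.erase s(x,z) :=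
                Multiset.cons_le_cons _ hle
            _ = F := Multiset.cons_erase hz

end Trail

section Euler
variable [DecidableEq V]

lemma closed_trail_exists {F : Multiset (Sym2 V)} (heven : ∀ v, Even (mdeg F v))
    {y : V} (hy : 0 < mdeg F y) : ∃ s : List V, walkEdges (y :: s) ≤ F := by
  obtain ⟨z, hz⟩ := exists_edge_of_mdeg_pos hy
  by_cases hzy : z = y
  · subst hzy
    refine ⟨[], ?_⟩
    have : walkEdges [z] = {s(z,z)} := by
      rw [walkEdges_cons_decomp]; simp [openEdges]
    rw [this, Multiset.singleton_le]
    exact hz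
  · have hyz : y ≠ z := fun h => hzy h.symm
    have hdeg : ∀ w, mdeg F w
        = mdeg ({s(y,z)} : Multiset (Sym2 V)) w + mdeg (F.erase s(y,z)) w :=
      fun w => mdeg_erase hz w
    have hodd' : Odd (mdeg (F.erase s(y,z)) z) := by
      have h1 := hdeg z
      have hdz : mdeg ({s(y,z)} : Multiset (Sym2 V)) z = 1 := by
        rw [mdeg_singleton]; simp [hyz]
      have hzpos : 0 < mdeg F z := mdeg_pos_of_mem (Sym2.eq_swap ▸ hz)
      rcases heven z with ⟨k, hk⟩
      exact ⟨k - 1, by omega⟩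
    have heven' : ∀ w, w ≠ z → w ≠ y → Even (mdeg (F.erase s(y,z)) w) := by
      intro w hwz hwy
      have h1 := hdeg w
      have h2 : mdeg ({s(y,z)} : Multiset (Sym2 V)) w = 0 := by
        rw [mdeg_singleton]; simp [Ne.symm hwy, Ne.symm hwz]
      rcases heven w with ⟨k, hk⟩
      exact ⟨k, by omega⟩
    obtain ⟨l, hl, hhead, hlast, hle⟩ :=
      trail_exists (F.erase s(y,z)).card (F.erase s(y,z)) z y le_rfl hzy hodd' heven'
    refine ⟨l.dropLast, ?_⟩
    have hm : l.dropLast ++ [y] = l := by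
      conv_rhs => rw [← List.dropLast_append_getLast hl, hlast]
    have key : walkEdges (y :: l.dropLast) = openEdges (y :: l) := by
      conv_rhs => rw [← hm]
      rw [show y :: (l.dropLast ++ [y]) = (y :: l.dropLast) ++ [y] from rfl,
        openEdges_snoc (y :: l.dropLast) (by simp) y, walkEdges_cons_decomp]
    rw [key, openEdges_cons_ne_nil y l hl, hhead]
    calc s(y, z) ::ₘ openEdges l ≤ s(y,z) ::ₘ (F.erase s(y,z)) :=
          Multiset.cons_le_cons _ hle
      _ = F := Multiset.cons_erase hz

lemma find_attach_vertex {F : Multiset (Sym2 V)} (a : V) (l : List V)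
    (hconn : connOn (walkEdges (a :: l) + F)) (hF : F ≠ 0) :
    ∃ y ∈ a :: l, 0 < mdeg F y := by
  obtain ⟨e, he⟩ := Multiset.exists_mem_of_ne_zero hF
  induction e using Sym2.inductionOn with
  | hf p q =>
    set E := walkEdges (a :: l) + F with hE
    have key : ∀ b, Relation.ReflTransGen (fun x y => s(x,y) ∈ E) b a →
        0 < mdeg F b → ∃ y ∈ a :: l, 0 < mdeg F y := by
      intro b hpath
      induction hpath using Relation.ReflTransGen.head_induction_on with
      | refl => exact fun hb => ⟨a, by simp, hb⟩
      | head hstep htail ih =>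
        rename_i x y
        intro hx
        rw [hE, Multiset.mem_add] at hstep
        rcases hstep with hw | hf2
        · exact ⟨x, mem_of_walkEdges a l hw, hx⟩
        · exact ih (mdeg_pos_of_mem (Sym2.eq_swap ▸ hf2))
    have hp : 0 < mdeg F p := mdeg_pos_of_mem he
    have hpE : 0 < mdeg E p := by rw [hE, mdeg_add]; omega
    have haE : 0 < mdeg E a := by
      rw [hE, mdeg_add, mdeg_walkEdges]
      have : 0 < (a :: l).count a := by simp [List.count_cons]
      omega
    exact key p (hconn p a hpE haE) hp

end Euler

section Euler2
variable [DecidableEq V]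

lemma walkEdges_ne_zero (a : V) (l : List V) : walkEdges (a :: l) ≠ 0 := by
  intro h
  have := mdeg_walkEdges a a l
  rw [h, mdeg_zero] at this
  have : 0 < (a :: l).count a := by simp [List.count_cons]
  omega

lemma hier : ∀ (n : ℕ) (F : Multiset (Sym2 V)) (a : V) (l : List V),
    F.card ≤ n → (∀ v, Even (mdeg F v)) → connOn (walkEdges (a :: l) + F) →
    ∃ (b : V) (m : List V), walkEdges (b :: m) = walkEdges (a :: l) + F := by
  intro n
  induction n with
  | zero =>
    intro F a l hcard _ _
    have : F = 0 := Multiset.card_eq_zero.mp (Nat.le_zero.mp hcard)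
    exact ⟨a, l, by rw [this, add_zero]⟩
  | succ n IH =>
    intro F a l hcard heven hconn
    by_cases hF : F = 0
    · exact ⟨a, l, by rw [hF, add_zero]⟩
    · obtain ⟨y, hy, hydeg⟩ := find_attach_vertex a l hconn hF
      obtain ⟨s, hle⟩ := closed_trail_exists heven hydeg
      set wC := walkEdges (y :: s) with hwC
      set F' := F - wC with hF'
      have hrest : F' + wC = F := by
        rw [hF', tsub_add_cancel_of_le hle]
      obtain ⟨w1, w2, hsplit⟩ := List.append_of_mem hy
      have hkey : walkEdges (y :: (s ++ y :: (w2 ++ w1))) = wC + walkEdges (a :: l) := by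
        rw [walkEdges_splice y s (w2 ++ w1)]
        congr 1
        have h1 : y :: (w2 ++ w1) = (y :: w2) ++ w1 := by simp
        rw [h1, walkEdges_append_comm (y :: w2) w1, ← hsplit]
      have htot : walkEdges (y :: (s ++ y :: (w2 ++ w1))) + F' = walkEdges (a :: l) + F := by
        rw [hkey]
        calc wC + walkEdges (a :: l) + F' = walkEdges (a :: l) + (F' + wC) := by abel
          _ = walkEdges (a :: l) + F := by rw [hrest]
      have hcardF : F.card = F'.card + wC.card := by
        rw [← hrest, Multiset.card_add]
      have hwCpos : 0 < wC.card := Multiset.card_pos.mpr (walkEdges_ne_zero y s)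
      have hcard' : F'.card ≤ n := by omega
      have heven' : ∀ v, Even (mdeg F' v) := by
        intro v
        have h1 : mdeg F v = mdeg F' v + mdeg wC v := by rw [← hrest, mdeg_add]
        have h2 : mdeg wC v = 2 * (y :: s).count v := mdeg_walkEdges v y s
        rcases heven v with ⟨k, hk⟩
        exact ⟨mdeg F' v / 2, by omega⟩
      have hconn' : connOn (walkEdges (y :: (s ++ y :: (w2 ++ w1))) + F') := by
        rw [htot]; exact hconn
      obtain ⟨b, m, hbm⟩ := IH F' y (s ++ y :: (w2 ++ w1)) hcard' heven' hconn'
      exact ⟨b, m, by rw [hbm, htot]⟩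

lemma euler_circuit {E : Multiset (Sym2 V)} (hE : E ≠ 0)
    (heven : ∀ v, Even (mdeg E v)) (hconn : connOn E) :
    ∃ (b : V) (m : List V), walkEdges (b :: m) = E := by
  obtain ⟨e, he⟩ := Multiset.exists_mem_of_ne_zero hE
  induction e using Sym2.inductionOn with
  | hf p q =>
    have hp : 0 < mdeg E p := mdeg_pos_of_mem he
    obtain ⟨s, hle⟩ := closed_trail_exists heven hp
    have hrest : E - walkEdges (p :: s) + walkEdges (p :: s) = E :=
      tsub_add_cancel_of_le hle
    have heven' : ∀ v, Even (mdeg (E - walkEdges (p :: s)) v) := by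
      intro v
      have h1 : mdeg E v = mdeg (E - walkEdges (p :: s)) v + mdeg (walkEdges (p :: s)) v := by
        conv_lhs => rw [← hrest]
        rw [mdeg_add]
      have h2 := mdeg_walkEdges v p s
      rcases heven v with ⟨k, hk⟩
      exact ⟨mdeg (E - walkEdges (p :: s)) v / 2, by omega⟩
    have hconn' : connOn (walkEdges (p :: s) + (E - walkEdges (p :: s))) := by
      rw [add_comm, hrest]; exact hconn
    obtain ⟨b, m, hbm⟩ := hier (E - walkEdges (p :: s)).card _ p s le_rfl heven' hconn'
    refine ⟨b, m, ?_⟩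
    rw [hbm, add_comm, hrest]

end Euler2

section Delete
variable [DecidableEq V]

lemma walkEdges_snoc (a : V) (m : List V) (d : V) :
    walkEdges ((a :: m) ++ [d]) = openEdges (a :: m)
      + {s((a :: m).getLast (by simp), d)} + {s(d, a)} := by
  rw [show (a :: m) ++ [d] = a :: (m ++ [d]) from rfl, walkEdges_cons_decomp]
  have hoe : openEdges (a :: (m ++ [d]))
      = openEdges (a :: m) + {s((a :: m).getLast (by simp), d)} :=
    openEdges_snoc (a :: m) (by simp) d
  have hg : (a :: (m ++ [d])).getLast (by simp) = d := by
    simp [List.getLast_append]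
  rw [hoe, hg]

lemma mcost_drop_last (c : V → V → ℝ) (hsymm : ∀ u v, c u v = c v u)
    (htri : ∀ u v w, c u w ≤ c u v + c v w) (a : V) (m : List V) (d : V) :
    mcost c (walkEdges (a :: m)) ≤ mcost c (walkEdges ((a :: m) ++ [d])) := by
  rw [walkEdges_snoc, walkEdges_cons_decomp, mcost_add, mcost_add, mcost_add,
    mcost_singleton, mcost_singleton, mcost_singleton]
  set g := (a :: m).getLast (by simp)
  have h := htri g d a
  have e1 := hsymm g a
  have e2 := hsymm g d
  have e3 := hsymm d a
  linarith

lemma delete_dups (c : V → V → ℝ) (hsymm : ∀ u v, c u v = c v u)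
    (htri : ∀ u v w, c u w ≤ c u v + c v w) (d : V) :
    ∀ (n : ℕ) (a : V) (l : List V), (a :: l).count d ≤ n → 1 ≤ (a :: l).count d →
    ∃ (b : V) (m : List V), (b :: m).count d = 1 ∧
      (∀ v, v ≠ d → (b :: m).count v = (a :: l).count v) ∧
      mcost c (walkEdges (b :: m)) ≤ mcost c (walkEdges (a :: l)) := by
  intro n
  induction n with
  | zero => intro a l h1 h2; omega
  | succ n IH =>
    intro a l hcard hpos
    by_cases hone : (a :: l).count d = 1
    · exact ⟨a, l, hone, fun v _ => rfl, le_rfl⟩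
    · have hmem : d ∈ a :: l := by
        rw [← List.count_pos_iff]; omega
      obtain ⟨w1, w2, hsplit⟩ := List.append_of_mem hmem
      have hwalk : walkEdges (a :: l) = walkEdges ((w2 ++ w1) ++ [d]) := by
        rw [hsplit, walkEdges_append_comm w1 (d :: w2),
          show (d :: w2) ++ w1 = [d] ++ (w2 ++ w1) by simp,
          walkEdges_append_comm [d] (w2 ++ w1)]
      have hcounts : ∀ v : V, (a :: l).count v = ((w2 ++ w1) ++ [d]).count v := by
        intro v
        rw [hsplit]
        simp [List.count_append, List.count_cons]
        omega
      have hdc : (w2 ++ w1).count d = (a :: l).count d - 1 := by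
        have := hcounts d
        simp [List.count_append] at this ⊢
        omega
      have hne : w2 ++ w1 ≠ [] := by
        intro h
        rw [h] at hdc
        simp at hdc
        omega
      obtain ⟨b0, m0, hbm0⟩ : ∃ b0 m0, w2 ++ w1 = b0 :: m0 := by
        cases hh : w2 ++ w1 with
        | nil => exact absurd hh hne
        | cons b0 m0 => exact ⟨b0, m0, rfl⟩
      have hcost0 : mcost c (walkEdges (b0 :: m0)) ≤ mcost c (walkEdges (a :: l)) := by
        rw [hwalk, hbm0]
        exact mcost_drop_last c hsymm htri b0 m0 d
      have hc0 : (b0 :: m0).count d = (a :: l).count d - 1 := by rw [← hbm0]; exact hdc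
      have hcv : ∀ v, v ≠ d → (b0 :: m0).count v = (a :: l).count v := by
        intro v hv
        rw [← hbm0, hcounts v]
        simp [List.count_append, List.count_cons, hv, Ne.symm hv]
      obtain ⟨b, m, hb1, hb2, hb3⟩ := IH b0 m0 (by omega) (by omega)
      refine ⟨b, m, hb1, ?_, hb3.trans hcost0⟩
      intro v hv
      rw [hb2 v hv, hcv v hv]

end Delete


/-- In a connected even-degree multigraph with a vertex `d` of degree `> 2`,
repeated shortcuts yield a multigraph where `d` has degree exactly `2`, all other degrees are
unchanged, connectivity on the support is preserved, and the cost does not increase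
(assuming the triangle inequality). -/
theorem shortcut_vertex_to_degree_two [Fintype V] [DecidableEq V]
    (c : V → V → ℝ) (E : Multiset (Sym2 V)) (d : V)
    (hsymm : ∀ u v, c u v = c v u)
    (hnonneg : ∀ u v, 0 ≤ c u v)
    (htri : ∀ u v w, c u w ≤ c u v + c v w)
    (heven : ∀ v, Even (mdeg E v))
    (hconn : connOn E)
    (hd : 2 < mdeg E d) :
    ∃ E' : Multiset (Sym2 V),
      mdeg E' d = 2 ∧ (∀ v, v ≠ d → mdeg E' v = mdeg E v) ∧
      connOn E' ∧ mcost c E' ≤ mcost c E := by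
  have hE : E ≠ 0 := by
    rintro rfl
    rw [mdeg_zero] at hd
    omega
  obtain ⟨b, m, hw⟩ := euler_circuit hE heven hconn
  have hcount : 2 ≤ (b :: m).count d := by
    have := mdeg_walkEdges d b m
    rw [hw] at this
    omega
  obtain ⟨b', m', h1, h2, h3⟩ :=
    delete_dups c hsymm htri d ((b :: m).count d) b m le_rfl (by omega)
  refine ⟨walkEdges (b' :: m'), ?_, ?_, connOn_walkEdges b' m', ?_⟩
  · rw [mdeg_walkEdges, h1]
  · intro v hv
    rw [mdeg_walkEdges, h2 v hv, ← hw, mdeg_walkEdges]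
  · rw [← hw]; exact h3
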